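/- arXiv:2502.14392 — 2 statements merged into one kernel-verified Lean document; each statement's English description precedes it below -/
import Mathlib

section
/- Let G be a (2,1)-tight multigraph with a vertex v₀ of degree 3 having three distinct neighbours v₁,v₂,v₃ (all different from v₀), and let G−v₀ be obtained from G by deleting v₀ with its incident edges. Then: (1) there is no (2,1)-tight subgraph of G−v₀ containing all of v₁, v₂ and v₃; (2) if v₁ and v₂ lie in a common (2,1)-tight subgraph of G−v₀, then neither the pair {v₁,v₃} nor the pair {v₂,v₃} lies in a common (2,1)-tight subgraph of G−v₀; (3) if v₁ and v₂ lie in a common (2,1)-tight subgraph of G−v₀, then neither the pair {v₁,v₃} nor the pair {v₂,v₃} lies in a common (2,2)-tight subgraph of G−v₀. -/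
namespace Crystal

/-- The wallpaper group `pm = ℤ² ⋊ 𝒞ₛ`.  An element is a pair of a translation
vector `t ∈ ℤ²` and a Boolean `r` recording the `𝒞ₛ`-component
(`true` = the reflection `s` in the x-axis). -/
@[ext] structure PM : Type where
  t : ℤ × ℤ
  r : Bool

namespace PM

/-- The action of the reflection component on translation vectors. -/
def act (σ : Bool) (z : ℤ × ℤ) : ℤ × ℤ := (z.1, if σ then -z.2 else z.2)

instance : Mul PM := ⟨fun a b => ⟨a.t + act a.r b.t, xor a.r b.r⟩⟩
instance : One PM := ⟨⟨0, false⟩⟩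
instance : Inv PM := ⟨fun a => ⟨act a.r (-a.t), a.r⟩⟩

lemma mul_def (a b : PM) : a * b = ⟨a.t + act a.r b.t, xor a.r b.r⟩ := rfl
lemma one_def : (1 : PM) = ⟨0, false⟩ := rfl
lemma inv_def (a : PM) : a⁻¹ = ⟨act a.r (-a.t), a.r⟩ := rfl

instance : Group PM where
  mul_assoc a b c := by
    obtain ⟨⟨x1, x2⟩, ra⟩ := a
    obtain ⟨⟨y1, y2⟩, rb⟩ := b
    obtain ⟨⟨z1, z2⟩, rc⟩ := c
    cases ra <;> cases rb <;> cases rc <;>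
      simp [mul_def, act, Prod.ext_iff] <;> omega
  one_mul a := by
    obtain ⟨⟨x1, x2⟩, ra⟩ := a
    cases ra <;> simp [mul_def, one_def, act]
  mul_one a := by
    obtain ⟨⟨x1, x2⟩, ra⟩ := a
    cases ra <;> simp [mul_def, one_def, act]
  inv_mul_cancel a := by
    obtain ⟨⟨x1, x2⟩, ra⟩ := a
    cases ra <;> simp [mul_def, one_def, inv_def, act, Prod.ext_iff]

/-- The affine action of `pm` on the plane: `(z,σ)·x = σ(x) + z`. -/
noncomputable def toPlane (g : PM) (x : ℝ × ℝ) : ℝ × ℝ :=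
  (x.1 + (g.t.1 : ℝ), (if g.r then -x.2 else x.2) + (g.t.2 : ℝ))

end PM

/-- A multigraph: a finite vertex set, a finite edge set, and two endpoint maps
(which also fix a reference orientation of every edge, from `fst` to `snd`).
Loops and parallel edges are allowed. -/
structure Multigraph (α β : Type) where
  verts : Finset α
  edges : Finset β
  fst : β → α
  snd : β → α
  fst_mem : ∀ e ∈ edges, fst e ∈ verts
  snd_mem : ∀ e ∈ edges, snd e ∈ verts

variable {α β : Type}

/-- `H` is a subgraph of `G`. -/
def IsSubgraph (H G : Multigraph α β) : Prop :=
  H.verts ⊆ G.verts ∧ H.edges ⊆ G.edges ∧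
    ∀ e ∈ H.edges, H.fst e = G.fst e ∧ H.snd e = G.snd e

/-- `(k,l)`-sparsity. -/
def Sparse (k l : ℕ) (G : Multigraph α β) : Prop :=
  ∀ H : Multigraph α β, IsSubgraph H G → 1 ≤ H.edges.card →
    (H.edges.card : ℤ) ≤ k * H.verts.card - l

/-- `(k,l)`-tightness. -/
def Tight (k l : ℕ) (G : Multigraph α β) : Prop :=
  Sparse k l G ∧ (G.edges.card : ℤ) = k * G.verts.card - l

/-- The degree of a vertex: the number of edge-incidences, loops counting twice. -/
def Multigraph.degree [DecidableEq α] (G : Multigraph α β) (v : α) : ℕ :=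
  ∑ e ∈ G.edges, ((if G.fst e = v then 1 else 0) + (if G.snd e = v then 1 else 0))

/-- The starting vertex of a step `(e, dir)` of a walk: `dir = true` means the
edge is traversed forwards. -/
def stepHead (G : Multigraph α β) (s : β × Bool) : α := if s.2 then G.fst s.1 else G.snd s.1

/-- The final vertex of a step of a walk. -/
def stepTail (G : Multigraph α β) (s : β × Bool) : α := if s.2 then G.snd s.1 else G.fst s.1

/-- `IsWalk G u v L` : `L` is a walk in `G` from `u` to `v`. -/
def IsWalk (G : Multigraph α β) : α → α → List (β × Bool) → Prop
  | u, v, [] => u = v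
  | u, v, s :: L => s.1 ∈ G.edges ∧ stepHead G s = u ∧ IsWalk G (stepTail G s) v L

/-- The net gain of a walk. -/
def walkGain (m : β → PM) (L : List (β × Bool)) : PM :=
  (L.map fun s => if s.2 then m s.1 else (m s.1)⁻¹).prod

/-- A gain graph is balanced if every closed walk has identity net gain. -/
def Balanced (G : Multigraph α β) (m : β → PM) : Prop :=
  ∀ u L, IsWalk G u u L → walkGain m L = 1

/-- A gain graph is purely periodic if every closed walk has net gain in the
translation subgroup `ℤ²`. -/
def PurelyPeriodic (G : Multigraph α β) (m : β → PM) : Prop :=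
  ∀ u L, IsWalk G u u L → (walkGain m L).r = false

/-- A multigraph is connected if every pair of its vertices is joined by a walk. -/
def Connected (G : Multigraph α β) : Prop :=
  ∀ u ∈ G.verts, ∀ v ∈ G.verts, ∃ L, IsWalk G u v L

/-- The conditions for `m` to be a gain assignment on `G`: parallel edges with the
same orientation get distinct gains, and loops get non-identity gains. -/
structure IsGainGraph (G : Multigraph α β) (m : β → PM) : Prop where
  parallel_ne : ∀ e ∈ G.edges, ∀ f ∈ G.edges,
    e ≠ f → G.fst e = G.fst f → G.snd e = G.snd f → m e ≠ m f
  loop_ne_one : ∀ e ∈ G.edges, G.fst e = G.snd e → m e ≠ 1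

/-- `ℤ²⋊𝒞ₛ`-tightness of a gain graph. -/
def PMTight (G : Multigraph α β) (m : β → PM) : Prop :=
  Tight 2 1 G ∧
    (∀ H : Multigraph α β, IsSubgraph H G → PurelyPeriodic H m → Sparse 2 2 H) ∧
    (∀ H : Multigraph α β, IsSubgraph H G → Balanced H m → Sparse 2 3 H)

/-- The orbit rigidity matrix of a `ℤ²⋊𝒞ₛ`-gain framework. -/
noncomputable def orbitMatrix [DecidableEq α] (G : Multigraph α β) (m : β → PM)
    (p : α → ℝ × ℝ) :
    Matrix {e : β // e ∈ G.edges} ({v : α // v ∈ G.verts} × Fin 2) ℝ :=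
  fun er vc =>
    let e : β := er.1
    let i : α := G.fst e
    let j : α := G.snd e
    let w : α := vc.1.1
    let entry : ℝ × ℝ :=
      if i = j then
        (if w = i then p i + p i - PM.toPlane (m e) (p i) - PM.toPlane (m e)⁻¹ (p i) else 0)
      else if w = i then p i - PM.toPlane (m e) (p j)
      else if w = j then p j - PM.toPlane (m e)⁻¹ (p i)
      else 0
    if vc.2 = 0 then entry.1 else entry.2

/-- A configuration is generic if its orbit rigidity matrix has the maximum
possible rank among all configurations. -/
def Generic [DecidableEq α] (G : Multigraph α β) (m : β → PM) (p : α → ℝ × ℝ) : Prop :=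
  ∀ q : α → ℝ × ℝ, (orbitMatrix G m q).rank ≤ (orbitMatrix G m p).rank

/-- A gain graph is rigid if the orbit rigidity matrix of a generic configuration
has rank `2|V| - 1`. -/
def Rigid [DecidableEq α] (G : Multigraph α β) (m : β → PM) : Prop :=
  ∃ p : α → ℝ × ℝ, Generic G m p ∧
    ((orbitMatrix G m p).rank : ℤ) = 2 * G.verts.card - 1

/-- A gain graph is independent if the rows of the orbit rigidity matrix of a
generic configuration are linearly independent. -/
def Independent [DecidableEq α] (G : Multigraph α β) (m : β → PM) : Prop :=
  ∃ p : α → ℝ × ℝ, Generic G m p ∧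
    LinearIndependent ℝ (fun er => orbitMatrix G m p er)

/-- A gain graph is minimally rigid if it is rigid and independent. -/
def MinimallyRigid [DecidableEq α] (G : Multigraph α β) (m : β → PM) : Prop :=
  Rigid G m ∧ Independent G m

/-- `e` joins `u` and `v` (in one of the two orientations). -/
def Joins (G : Multigraph α β) (e : β) (u v : α) : Prop :=
  (G.fst e = u ∧ G.snd e = v) ∨ (G.fst e = v ∧ G.snd e = u)

/-- The gain of an edge read with `v` as its initial vertex (inverting the gain
if the edge is oriented towards `v`). -/
def gainFrom [DecidableEq α] (G : Multigraph α β) (m : β → PM) (v : α) (e : β) : PM :=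
  if G.fst e = v then m e else (m e)⁻¹

/-- The endpoint of an edge other than `v` (for an edge incident with `v`). -/
def otherEnd [DecidableEq α] (G : Multigraph α β) (v : α) (e : β) : α :=
  if G.fst e = v then G.snd e else G.fst e

/-- Deletion of a vertex together with all edges incident with it. -/
def Multigraph.deleteVertex [DecidableEq α] (G : Multigraph α β) (v : α) :
    Multigraph α β where
  verts := G.verts.erase v
  edges := G.edges.filter fun e => G.fst e ≠ v ∧ G.snd e ≠ v
  fst := G.fst
  snd := G.snd
  fst_mem := fun e he => by
    rw [Finset.mem_filter] at he
    exact Finset.mem_erase.2 ⟨he.2.1, G.fst_mem e he.1⟩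
  snd_mem := fun e he => by
    rw [Finset.mem_filter] at he
    exact Finset.mem_erase.2 ⟨he.2.2, G.snd_mem e he.1⟩

/-- Addition of a new edge `f` from `u` to `v`. -/
def Multigraph.addEdge [DecidableEq α] [DecidableEq β] (G : Multigraph α β)
    (f : β) (u v : α) : Multigraph α β where
  verts := insert u (insert v G.verts)
  edges := insert f G.edges
  fst := Function.update G.fst f u
  snd := Function.update G.snd f v
  fst_mem := fun e he => by
    by_cases hef : e = f
    · subst hef; simp
    · rw [Function.update_of_ne hef]
      have heG : e ∈ G.edges := by
        rcases Finset.mem_insert.1 he with h | h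
        · exact absurd h hef
        · exact h
      exact Finset.mem_insert_of_mem (Finset.mem_insert_of_mem (G.fst_mem e heG))
  snd_mem := fun e he => by
    by_cases hef : e = f
    · subst hef; simp
    · rw [Function.update_of_ne hef]
      have heG : e ∈ G.edges := by
        rcases Finset.mem_insert.1 he with h | h
        · exact absurd h hef
        · exact h
      exact Finset.mem_insert_of_mem (Finset.mem_insert_of_mem (G.snd_mem e heG))

/-- `(G',m')` is obtained from `(G,m)` by a gained 0-extension. -/
def IsZeroExtension [DecidableEq α] [DecidableEq β] (G : Multigraph α β) (m : β → PM)
    (G' : Multigraph α β) (m' : β → PM) : Prop :=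
  ∃ v₀ v₁ v₂ f₁ f₂, v₀ ∉ G.verts ∧ v₁ ∈ G.verts ∧ v₂ ∈ G.verts ∧
    f₁ ∉ G.edges ∧ f₂ ∉ G.edges ∧ f₁ ≠ f₂ ∧
    G'.verts = insert v₀ G.verts ∧ G'.edges = insert f₁ (insert f₂ G.edges) ∧
    (∀ e ∈ G.edges, G'.fst e = G.fst e ∧ G'.snd e = G.snd e ∧ m' e = m e) ∧
    Joins G' f₁ v₀ v₁ ∧ Joins G' f₂ v₀ v₂ ∧
    IsGainGraph G' m'

/-- `(G',m')` is obtained from `(G,m)` by a gained 1-extension. -/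
def IsOneExtension [DecidableEq α] [DecidableEq β] (G : Multigraph α β) (m : β → PM)
    (G' : Multigraph α β) (m' : β → PM) : Prop :=
  ∃ v₀ v₃ e f₁ f₂ f₃, v₀ ∉ G.verts ∧ v₃ ∈ G.verts ∧ e ∈ G.edges ∧
    f₁ ∉ G.edges.erase e ∧ f₂ ∉ G.edges.erase e ∧ f₃ ∉ G.edges.erase e ∧
    f₁ ≠ f₂ ∧ f₁ ≠ f₃ ∧ f₂ ≠ f₃ ∧
    G'.verts = insert v₀ G.verts ∧
    G'.edges = insert f₁ (insert f₂ (insert f₃ (G.edges.erase e))) ∧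
    (∀ e' ∈ G.edges.erase e, G'.fst e' = G.fst e' ∧ G'.snd e' = G.snd e' ∧ m' e' = m e') ∧
    Joins G' f₁ v₀ (G.fst e) ∧ Joins G' f₂ v₀ (G.snd e) ∧ Joins G' f₃ v₀ v₃ ∧
    (gainFrom G' m' v₀ f₁)⁻¹ * gainFrom G' m' v₀ f₂ = m e ∧
    IsGainGraph G' m'

/-- `(G',m')` is obtained from `(G,m)` by a gained loop-1-extension. -/
def IsLoopOneExtension [DecidableEq α] [DecidableEq β] (G : Multigraph α β) (m : β → PM)
    (G' : Multigraph α β) (m' : β → PM) : Prop :=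
  ∃ v₀ v₁ l f, v₀ ∉ G.verts ∧ v₁ ∈ G.verts ∧ l ∉ G.edges ∧ f ∉ G.edges ∧ l ≠ f ∧
    G'.verts = insert v₀ G.verts ∧ G'.edges = insert l (insert f G.edges) ∧
    (∀ e ∈ G.edges, G'.fst e = G.fst e ∧ G'.snd e = G.snd e ∧ m' e = m e) ∧
    G'.fst l = v₀ ∧ G'.snd l = v₀ ∧ (m' l).r = true ∧
    Joins G' f v₀ v₁ ∧ IsGainGraph G' m'

/-- A `ℤ²⋊𝒞ₛ`-tight gain graph on `K₁¹`: a single vertex with a single loop whose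
gain has non-trivial `𝒞ₛ`-component. -/
def IsTightK11 (G : Multigraph α β) (m : β → PM) : Prop :=
  ∃ v l, G.verts = {v} ∧ G.edges = {l} ∧ G.fst l = v ∧ G.snd l = v ∧ (m l).r = true

/-! A `(2,1)`-tight `H ⊆ G - v₀` containing `v₁, v₂, v₃` has `2|V(H)| - 1` edges; adding `v₀` and
its three edges gives `2(|V(H)| + 1) - 1 + 1` edges, against the sparsity of `G`. Two tight
subgraphs of `G - v₀` meeting in a vertex have a `(2,1)`-tight union, since
`|E(H₁ ∪ H₂)| = |E(H₁)| + |E(H₂)| - |E(H₁ ∩ H₂)|` and the intersection obeys the count of `H₂`;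
two tight subgraphs through pairs with a common neighbour would therefore merge into one through
all three. -/

variable {k l l' : ℕ} {G H H₁ H₂ : Multigraph α β}

def Multigraph.restrict (G : Multigraph α β) (S : Finset α) (F : Finset β)
    (hSF : ∀ e ∈ F, G.fst e ∈ S ∧ G.snd e ∈ S) : Multigraph α β where
  verts := S
  edges := F
  fst := G.fst
  snd := G.snd
  fst_mem e he := (hSF e he).1
  snd_mem e he := (hSF e he).2

lemma Multigraph.restrict_isSubgraph {S : Finset α} {F : Finset β}
    (hSF : ∀ e ∈ F, G.fst e ∈ S ∧ G.snd e ∈ S) (hS : S ⊆ G.verts) (hF : F ⊆ G.edges) :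
    IsSubgraph (G.restrict S F hSF) G :=
  ⟨hS, hF, fun _ _ => ⟨rfl, rfl⟩⟩

lemma IsSubgraph.trans {K : Multigraph α β} (hHK : IsSubgraph H K) (hKG : IsSubgraph K G) :
    IsSubgraph H G :=
  ⟨hHK.1.trans hKG.1, hHK.2.1.trans hKG.2.1, fun e he =>
    ⟨(hHK.2.2 e he).1.trans (hKG.2.2 e (hHK.2.1 he)).1,
      (hHK.2.2 e he).2.trans (hKG.2.2 e (hHK.2.1 he)).2⟩⟩

lemma IsSubgraph.ends_mem (h : IsSubgraph H G) {e : β} (he : e ∈ H.edges) :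
    G.fst e ∈ H.verts ∧ G.snd e ∈ H.verts :=
  ⟨(h.2.2 e he).1 ▸ H.fst_mem e he, (h.2.2 e he).2 ▸ H.snd_mem e he⟩

lemma Sparse.mono (hG : Sparse k l G) (h : IsSubgraph H G) : Sparse k l H :=
  fun K hK hcard => hG K (hK.trans h) hcard

lemma Sparse.card_le (hG : Sparse k l G) {S : Finset α} {F : Finset β}
    (hSF : ∀ e ∈ F, G.fst e ∈ S ∧ G.snd e ∈ S) (hS : S ⊆ G.verts) (hF : F ⊆ G.edges)
    (hne : F.Nonempty) : (F.card : ℤ) ≤ k * S.card - l :=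
  hG _ (Multigraph.restrict_isSubgraph hSF hS hF) hne.card_pos

lemma Sparse.not_tight_of_lt_card_edges_to [DecidableEq α] (hG : Sparse k l G)
    (hH : IsSubgraph H G) {v : α} (hv : v ∈ G.verts) (hvH : v ∉ H.verts)
    {F : Finset β} (hF : F ⊆ G.edges) (hdisj : Disjoint H.edges F)
    (hends : ∀ e ∈ F, G.fst e ∈ insert v H.verts ∧ G.snd e ∈ insert v H.verts)
    (hk : k < F.card) : ¬ Tight k l H := by
  classical
  intro hHt
  have hSF : ∀ e ∈ H.edges ∪ F, G.fst e ∈ insert v H.verts ∧ G.snd e ∈ insert v H.verts := by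
    intro e he
    rcases Finset.mem_union.1 he with he | he
    · exact ⟨Finset.mem_insert_of_mem (hH.ends_mem he).1,
        Finset.mem_insert_of_mem (hH.ends_mem he).2⟩
    · exact hends e he
  have hbound := hG.card_le hSF (Finset.insert_subset hv hH.1) (Finset.union_subset hH.2.1 hF)
    (Finset.card_pos.1 ((Nat.zero_le k).trans_lt hk) |>.mono Finset.subset_union_right)
  rw [Finset.card_union_of_disjoint hdisj, Finset.card_insert_of_notMem hvH] at hbound
  push_cast at hbound
  linarith [hHt.2]

lemma Sparse.exists_tight_union (hG : Sparse k l G) (hl : l < k) (hl' : l' ≤ k)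
    (h₁ : IsSubgraph H₁ G) (h₂ : IsSubgraph H₂ G) (ht₁ : Tight k l H₁) (ht₂ : Tight k l' H₂)
    {w : α} (hw₁ : w ∈ H₁.verts) (hw₂ : w ∈ H₂.verts) :
    ∃ U, IsSubgraph U G ∧ Tight k l U ∧ H₁.verts ⊆ U.verts ∧ H₂.verts ⊆ U.verts := by
  classical
  have hSF : ∀ e ∈ H₁.edges ∪ H₂.edges,
      G.fst e ∈ H₁.verts ∪ H₂.verts ∧ G.snd e ∈ H₁.verts ∪ H₂.verts := by
    intro e he
    rcases Finset.mem_union.1 he with he | he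
    · exact ⟨Finset.mem_union_left _ (h₁.ends_mem he).1,
        Finset.mem_union_left _ (h₁.ends_mem he).2⟩
    · exact ⟨Finset.mem_union_right _ (h₂.ends_mem he).1,
        Finset.mem_union_right _ (h₂.ends_mem he).2⟩
  have hU := Multigraph.restrict_isSubgraph hSF (Finset.union_subset h₁.1 h₂.1)
    (Finset.union_subset h₁.2.1 h₂.2.1)
  refine ⟨_, hU, ⟨hG.mono hU, ?_⟩, Finset.subset_union_left, Finset.subset_union_right⟩
  have hV₁ : 0 < H₁.verts.card := Finset.card_pos.2 ⟨w, hw₁⟩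
  have hVI : 0 < (H₁.verts ∩ H₂.verts).card :=
    Finset.card_pos.2 ⟨w, Finset.mem_inter.2 ⟨hw₁, hw₂⟩⟩
  have hE₁ : 0 < H₁.edges.card := by have := ht₁.2; zify; nlinarith
  -- An edgeless intersection still obeys the count because it contains `w` and `l' ≤ k`.
  have hEI : ((H₁.edges ∩ H₂.edges).card : ℤ) ≤ k * (H₁.verts ∩ H₂.verts).card - l' := by
    rcases (H₁.edges ∩ H₂.edges).eq_empty_or_nonempty with hI | hI
    · rw [hI, Finset.card_empty]; push_cast; nlinarith
    refine ht₂.1.card_le (fun e he => ?_) Finset.inter_subset_right Finset.inter_subset_right hI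
    obtain ⟨he₁, he₂⟩ := Finset.mem_inter.1 he
    rw [(h₂.2.2 e he₂).1, (h₂.2.2 e he₂).2]
    exact ⟨Finset.mem_inter.2 ⟨(h₁.ends_mem he₁).1, (h₂.ends_mem he₂).1⟩,
      Finset.mem_inter.2 ⟨(h₁.ends_mem he₁).2, (h₂.ends_mem he₂).2⟩⟩
  have hupper := hG.card_le hSF (Finset.union_subset h₁.1 h₂.1)
    (Finset.union_subset h₁.2.1 h₂.2.1) (Finset.card_pos.1 hE₁ |>.mono Finset.subset_union_left)
  have hV := Finset.card_union_add_card_inter H₁.verts H₂.verts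
  have hE := Finset.card_union_add_card_inter H₁.edges H₂.edges
  show ((H₁.edges ∪ H₂.edges).card : ℤ) = k * (H₁.verts ∪ H₂.verts).card - l
  zify at hV hE
  linarith [ht₁.2, ht₂.2, congrArg ((k : ℤ) * ·) hV]

lemma mem_insert_of_otherEnd_mem [DecidableEq α] {v : α} {e : β}
    (hv : G.fst e = v ∨ G.snd e = v) {S : Finset α} (hS : otherEnd G v e ∈ S) :
    G.fst e ∈ insert v S ∧ G.snd e ∈ insert v S := by
  unfold otherEnd at hS
  split_ifs at hS with h
  · exact ⟨h ▸ Finset.mem_insert_self _ _, Finset.mem_insert_of_mem hS⟩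
  · exact ⟨Finset.mem_insert_of_mem hS, (hv.resolve_left h) ▸ Finset.mem_insert_self _ _⟩

lemma Multigraph.deleteVertex_isSubgraph [DecidableEq α] (G : Multigraph α β) (v : α) :
    IsSubgraph (G.deleteVertex v) G :=
  ⟨Finset.erase_subset _ _, Finset.filter_subset _ _, fun _ _ => ⟨rfl, rfl⟩⟩

lemma Multigraph.notMem_edges_deleteVertex [DecidableEq α] {v : α} {e : β}
    (he : G.fst e = v ∨ G.snd e = v) : e ∉ (G.deleteVertex v).edges := by
  simp only [deleteVertex, Finset.mem_filter, not_and, not_not]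
  tauto

lemma Sparse.not_tight_of_three_neighbours [DecidableEq α] (hG : Sparse k l G) (hk : k < 3)
    {v₀ v₁ v₂ v₃ : α} (hv₀ : v₀ ∈ G.verts) {e₁ e₂ e₃ : β} (he12 : e₁ ≠ e₂) (he13 : e₁ ≠ e₃)
    (he23 : e₂ ≠ e₃) (hm₁ : e₁ ∈ G.edges) (hm₂ : e₂ ∈ G.edges) (hm₃ : e₃ ∈ G.edges)
    (hi₁ : G.fst e₁ = v₀ ∨ G.snd e₁ = v₀) (ho₁ : otherEnd G v₀ e₁ = v₁)
    (hi₂ : G.fst e₂ = v₀ ∨ G.snd e₂ = v₀) (ho₂ : otherEnd G v₀ e₂ = v₂)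
    (hi₃ : G.fst e₃ = v₀ ∨ G.snd e₃ = v₀) (ho₃ : otherEnd G v₀ e₃ = v₃)
    (hHD : IsSubgraph H (G.deleteVertex v₀))
    (h₁ : v₁ ∈ H.verts) (h₂ : v₂ ∈ H.verts) (h₃ : v₃ ∈ H.verts) : ¬ Tight k l H := by
  classical
  refine hG.not_tight_of_lt_card_edges_to (hHD.trans (G.deleteVertex_isSubgraph v₀)) hv₀
    (fun h => Finset.notMem_erase v₀ G.verts (hHD.1 h)) (F := {e₁, e₂, e₃}) ?_ ?_ ?_ ?_
  · simp [Finset.insert_subset_iff, hm₁, hm₂, hm₃]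
  · simp only [Finset.disjoint_insert_right, Finset.disjoint_singleton_right]
    exact ⟨fun h => Multigraph.notMem_edges_deleteVertex hi₁ (hHD.2.1 h),
      fun h => Multigraph.notMem_edges_deleteVertex hi₂ (hHD.2.1 h),
      fun h => Multigraph.notMem_edges_deleteVertex hi₃ (hHD.2.1 h)⟩
  · intro e he
    simp only [Finset.mem_insert, Finset.mem_singleton] at he
    rcases he with rfl | rfl | rfl
    exacts [mem_insert_of_otherEnd_mem hi₁ (ho₁ ▸ h₁), mem_insert_of_otherEnd_mem hi₂ (ho₂ ▸ h₂),
      mem_insert_of_otherEnd_mem hi₃ (ho₃ ▸ h₃)]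
  · rw [Finset.card_insert_of_notMem (by simp [he12, he13]),
      Finset.card_insert_of_notMem (by simp [he23]), Finset.card_singleton]
    exact hk

theorem subgraphs_lemma_general {α β : Type} [DecidableEq α]
    (G : Multigraph α β) (hG : Tight 2 1 G)
    (v₀ v₁ v₂ v₃ : α)
    (hv₀ : v₀ ∈ G.verts)
    (e₁ e₂ e₃ : β) (he12 : e₁ ≠ e₂) (he13 : e₁ ≠ e₃) (he23 : e₂ ≠ e₃)
    (hm₁ : e₁ ∈ G.edges) (hm₂ : e₂ ∈ G.edges) (hm₃ : e₃ ∈ G.edges)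
    (hi₁ : G.fst e₁ = v₀ ∨ G.snd e₁ = v₀) (ho₁ : otherEnd G v₀ e₁ = v₁)
    (hi₂ : G.fst e₂ = v₀ ∨ G.snd e₂ = v₀) (ho₂ : otherEnd G v₀ e₂ = v₂)
    (hi₃ : G.fst e₃ = v₀ ∨ G.snd e₃ = v₀) (ho₃ : otherEnd G v₀ e₃ = v₃) :
    (¬ ∃ H : Multigraph α β, IsSubgraph H (G.deleteVertex v₀) ∧ Tight 2 1 H ∧
        v₁ ∈ H.verts ∧ v₂ ∈ H.verts ∧ v₃ ∈ H.verts) ∧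
    ((∃ H : Multigraph α β, IsSubgraph H (G.deleteVertex v₀) ∧ Tight 2 1 H ∧
        v₁ ∈ H.verts ∧ v₂ ∈ H.verts) →
      (¬ ∃ H : Multigraph α β, IsSubgraph H (G.deleteVertex v₀) ∧ Tight 2 1 H ∧
          v₁ ∈ H.verts ∧ v₃ ∈ H.verts) ∧
      (¬ ∃ H : Multigraph α β, IsSubgraph H (G.deleteVertex v₀) ∧ Tight 2 1 H ∧
          v₂ ∈ H.verts ∧ v₃ ∈ H.verts)) ∧
    ((∃ H : Multigraph α β, IsSubgraph H (G.deleteVertex v₀) ∧ Tight 2 1 H ∧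
        v₁ ∈ H.verts ∧ v₂ ∈ H.verts) →
      (¬ ∃ H : Multigraph α β, IsSubgraph H (G.deleteVertex v₀) ∧ Tight 2 2 H ∧
          v₁ ∈ H.verts ∧ v₃ ∈ H.verts) ∧
      (¬ ∃ H : Multigraph α β, IsSubgraph H (G.deleteVertex v₀) ∧ Tight 2 2 H ∧
          v₂ ∈ H.verts ∧ v₃ ∈ H.verts)) := by
  have hD : Sparse 2 1 (G.deleteVertex v₀) := hG.1.mono (G.deleteVertex_isSubgraph v₀)
  have no_tight_all : ¬ ∃ H : Multigraph α β, IsSubgraph H (G.deleteVertex v₀) ∧ Tight 2 1 H ∧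
      v₁ ∈ H.verts ∧ v₂ ∈ H.verts ∧ v₃ ∈ H.verts := fun ⟨_, hHD, hH, h₁, h₂, h₃⟩ =>
    hG.1.not_tight_of_three_neighbours (by norm_num) hv₀ he12 he13 he23 hm₁ hm₂ hm₃
      hi₁ ho₁ hi₂ ho₂ hi₃ ho₃ hHD h₁ h₂ h₃ hH
  have absorb : ∀ {l : ℕ}, l ≤ 2 → ∀ {H₁ H₂ : Multigraph α β} {w : α},
      IsSubgraph H₁ (G.deleteVertex v₀) → Tight 2 1 H₁ → v₁ ∈ H₁.verts → v₂ ∈ H₁.verts →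
      IsSubgraph H₂ (G.deleteVertex v₀) → Tight 2 l H₂ → v₃ ∈ H₂.verts →
      w ∈ H₁.verts → w ∈ H₂.verts → False := by
    intro l hl H₁ H₂ w hs₁ ht₁ h₁ h₂ hs₂ ht₂ h₃ hw₁ hw₂
    obtain ⟨U, hU, htU, hH₁U, hH₂U⟩ := hD.exists_tight_union one_lt_two hl hs₁ hs₂ ht₁ ht₂ hw₁ hw₂
    exact no_tight_all ⟨U, hU, htU, hH₁U h₁, hH₁U h₂, hH₂U h₃⟩
  refine ⟨no_tight_all, fun ⟨H₁, hs₁, ht₁, h₁, h₂⟩ => ⟨?_, ?_⟩,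
    fun ⟨H₁, hs₁, ht₁, h₁, h₂⟩ => ⟨?_, ?_⟩⟩ <;>
  rintro ⟨H₂, hs₂, ht₂, hw, h₃⟩ <;>
  exact absorb (by norm_num) hs₁ ht₁ h₁ h₂ hs₂ ht₂ h₃ ‹_› hw

/-- Tight subgraphs of `G - v₀` avoiding `v₀` cannot contain too
many neighbours of a degree-3 vertex `v₀` with three distinct neighbours. -/
theorem subgraphs_lemma {α β : Type} [DecidableEq α]
    (G : Multigraph α β) (hG : Tight 2 1 G)
    (v₀ v₁ v₂ v₃ : α) (h01 : v₁ ≠ v₀) (h02 : v₂ ≠ v₀) (h03 : v₃ ≠ v₀)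
    (h12 : v₁ ≠ v₂) (h13 : v₁ ≠ v₃) (h23 : v₂ ≠ v₃)
    (hv₀ : v₀ ∈ G.verts) (hdeg : G.degree v₀ = 3)
    (e₁ e₂ e₃ : β) (he12 : e₁ ≠ e₂) (he13 : e₁ ≠ e₃) (he23 : e₂ ≠ e₃)
    (hm₁ : e₁ ∈ G.edges) (hm₂ : e₂ ∈ G.edges) (hm₃ : e₃ ∈ G.edges)
    (hi₁ : G.fst e₁ = v₀ ∨ G.snd e₁ = v₀) (ho₁ : otherEnd G v₀ e₁ = v₁)
    (hi₂ : G.fst e₂ = v₀ ∨ G.snd e₂ = v₀) (ho₂ : otherEnd G v₀ e₂ = v₂)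
    (hi₃ : G.fst e₃ = v₀ ∨ G.snd e₃ = v₀) (ho₃ : otherEnd G v₀ e₃ = v₃) :
    (¬ ∃ H : Multigraph α β, IsSubgraph H (G.deleteVertex v₀) ∧ Tight 2 1 H ∧
        v₁ ∈ H.verts ∧ v₂ ∈ H.verts ∧ v₃ ∈ H.verts) ∧
    ((∃ H : Multigraph α β, IsSubgraph H (G.deleteVertex v₀) ∧ Tight 2 1 H ∧
        v₁ ∈ H.verts ∧ v₂ ∈ H.verts) →
      (¬ ∃ H : Multigraph α β, IsSubgraph H (G.deleteVertex v₀) ∧ Tight 2 1 H ∧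
          v₁ ∈ H.verts ∧ v₃ ∈ H.verts) ∧
      (¬ ∃ H : Multigraph α β, IsSubgraph H (G.deleteVertex v₀) ∧ Tight 2 1 H ∧
          v₂ ∈ H.verts ∧ v₃ ∈ H.verts)) ∧
    ((∃ H : Multigraph α β, IsSubgraph H (G.deleteVertex v₀) ∧ Tight 2 1 H ∧
        v₁ ∈ H.verts ∧ v₂ ∈ H.verts) →
      (¬ ∃ H : Multigraph α β, IsSubgraph H (G.deleteVertex v₀) ∧ Tight 2 2 H ∧
          v₁ ∈ H.verts ∧ v₃ ∈ H.verts) ∧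
      (¬ ∃ H : Multigraph α β, IsSubgraph H (G.deleteVertex v₀) ∧ Tight 2 2 H ∧
          v₂ ∈ H.verts ∧ v₃ ∈ H.verts)) :=
  subgraphs_lemma_general G hG v₀ v₁ v₂ v₃ hv₀ e₁ e₂ e₃ he12 he13 he23 hm₁ hm₂ hm₃ hi₁ ho₁ hi₂ ho₂
    hi₃ ho₃

end Crystal
end

section
/- Let (G,m) be a ℤ²⋊Cs-gain graph with purely periodic subgraphs G_A and G_B. If G_A∩G_B is connected (in particular nonempty), then G_A∪G_B is purely periodic. -/
/-
A gain graph is purely periodic exactly when the `𝒞ₛ`-components of its gains are switched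
to the identity by some `ρ : V → ℤ/2`, i.e. `r(m e) = ρ(fst e) + ρ(snd e)` on every edge; in
each component, `ρ v` is the `𝒞ₛ`-component of the gain of any walk from a fixed root to `v`.
Two switching functions of a connected graph differ by a constant, so those of `G_A` and `G_B`
can be shifted to agree on `G_A ∩ G_B` and then glue to one of `G_A ∪ G_B`.
-/

namespace Crystal

variable {α β : Type}

namespace PM

@[simp] lemma r_mul (a b : PM) : (a * b).r = (a.r ^^ b.r) := rfl

@[simp] lemma r_inv (a : PM) : a⁻¹.r = a.r := rfl

@[simp] lemma r_one : (1 : PM).r = false := rfl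

end PM

lemma IsSubgraph.of_subset {H K G : Multigraph α β} (hH : IsSubgraph H G)
    (hK : IsSubgraph K G) (hV : H.verts ⊆ K.verts) (hE : H.edges ⊆ K.edges) :
    IsSubgraph H K :=
  ⟨hV, hE, fun e he => ⟨(hH.2.2 e he).1.trans (hK.2.2 e (hE he)).1.symm,
    (hH.2.2 e he).2.trans (hK.2.2 e (hE he)).2.symm⟩⟩

section Walks

variable {G : Multigraph α β} {m : β → PM}

def flipStep (s : β × Bool) : β × Bool := (s.1, !s.2)

lemma IsWalk.append {u v w : α} {L₁ L₂ : List (β × Bool)}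
    (h₁ : IsWalk G u v L₁) (h₂ : IsWalk G v w L₂) : IsWalk G u w (L₁ ++ L₂) := by
  induction L₁ generalizing u with
  | nil => obtain rfl : u = v := h₁; exact h₂
  | cons s L ih => exact ⟨h₁.1, h₁.2.1, ih h₁.2.2⟩

lemma isWalk_singleton {e : β} (he : e ∈ G.edges) :
    IsWalk G (G.fst e) (G.snd e) [(e, true)] :=
  ⟨he, rfl, rfl⟩

lemma IsWalk.reverse {u v : α} {L : List (β × Bool)} (h : IsWalk G u v L) :
    IsWalk G v u (L.reverse.map flipStep) := by
  induction L generalizing u with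
  | nil => obtain rfl : u = v := h; rfl
  | cons s L ih =>
    obtain ⟨he, rfl, hL⟩ := h
    have hs : IsWalk G (stepTail G s) (stepHead G s) [flipStep s] := by
      obtain ⟨e, _ | _⟩ := s <;> exact ⟨he, rfl, rfl⟩
    rw [List.reverse_cons, List.map_append]
    exact (ih hL).append hs

lemma walkGain_r_cons (s : β × Bool) (L : List (β × Bool)) :
    (walkGain m (s :: L)).r = ((m s.1).r ^^ (walkGain m L).r) := by
  obtain ⟨e, _ | _⟩ := s <;> simp [walkGain]

lemma walkGain_r_append (L₁ L₂ : List (β × Bool)) :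
    (walkGain m (L₁ ++ L₂)).r = ((walkGain m L₁).r ^^ (walkGain m L₂).r) := by
  simp [walkGain]

lemma walkGain_r_reverse (L : List (β × Bool)) :
    (walkGain m (L.reverse.map flipStep)).r = (walkGain m L).r := by
  induction L with
  | nil => rfl
  | cons s L ih =>
    rw [List.reverse_cons, List.map_append, walkGain_r_append, ih, walkGain_r_cons,
      List.map_singleton, walkGain_r_cons, Bool.xor_comm]
    simp [walkGain, flipStep]

lemma PurelyPeriodic.walkGain_r_eq (hpp : PurelyPeriodic G m) {u v : α}
    {L₁ L₂ : List (β × Bool)} (h₁ : IsWalk G u v L₁) (h₂ : IsWalk G u v L₂) :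
    (walkGain m L₁).r = (walkGain m L₂).r := by
  have hclosed := hpp u _ (h₁.append h₂.reverse)
  rw [walkGain_r_append, walkGain_r_reverse] at hclosed
  simpa using hclosed

end Walks

def walkSetoid (G : Multigraph α β) : Setoid α where
  r u v := ∃ L, IsWalk G u v L
  iseqv :=
    { refl := fun _ => ⟨[], rfl⟩
      symm := fun ⟨_, h⟩ => ⟨_, h.reverse⟩
      trans := fun ⟨_, h₁⟩ ⟨_, h₂⟩ => ⟨_, h₁.append h₂⟩ }

/-- `ρ` switches the `𝒞ₛ`-components of all gains to the identity, with `Bool` read as `ℤ/2`. -/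
def IsSwitching (G : Multigraph α β) (m : β → PM) (ρ : α → Bool) : Prop :=
  ∀ e ∈ G.edges, (ρ (G.fst e) ^^ ρ (G.snd e)) = (m e).r

section Switching

variable {G H : Multigraph α β} {m : β → PM} {ρ ρ' : α → Bool}

lemma IsSwitching.walkGain_r (hρ : IsSwitching G m ρ) {u v : α} {L : List (β × Bool)}
    (h : IsWalk G u v L) : (walkGain m L).r = (ρ u ^^ ρ v) := by
  induction L generalizing u with
  | nil => obtain rfl : u = v := h; simp [walkGain]
  | cons s L ih =>
    obtain ⟨e, d⟩ := s
    obtain ⟨he, rfl, hL⟩ := h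
    rw [walkGain_r_cons, ih hL, ← hρ e he]
    cases d
    · simp only [stepHead, stepTail, Bool.false_eq_true, if_false]
      rw [Bool.xor_left_comm]
      simp
    · simp [stepHead, stepTail]

lemma IsSwitching.purelyPeriodic (hρ : IsSwitching G m ρ) : PurelyPeriodic G m :=
  fun _ _ h => by rw [hρ.walkGain_r h, Bool.xor_self]

lemma PurelyPeriodic.exists_isSwitching (hpp : PurelyPeriodic G m) :
    ∃ ρ, IsSwitching G m ρ := by
  let root : α → α := fun v => (Quotient.mk (walkSetoid G) v).out
  choose path hpath using fun v => Quotient.mk_out (s := walkSetoid G) v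
  refine ⟨fun v => (walkGain m (path v)).r, fun e he => ?_⟩
  have hroot : root (G.fst e) = root (G.snd e) :=
    congrArg Quotient.out (Quotient.sound ⟨_, isWalk_singleton he⟩)
  have hpath' : IsWalk G (root (G.snd e)) (G.snd e) (path (G.fst e) ++ [(e, true)]) :=
    hroot ▸ (hpath (G.fst e)).append (isWalk_singleton he)
  beta_reduce
  rw [← hpp.walkGain_r_eq hpath' (hpath (G.snd e)), walkGain_r_append]
  simp [walkGain]

lemma IsSwitching.mono (hρ : IsSwitching G m ρ) (hHG : IsSubgraph H G) :
    IsSwitching H m ρ := fun e he => by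
  rw [(hHG.2.2 e he).1, (hHG.2.2 e he).2]
  exact hρ e (hHG.2.1 he)

lemma IsSwitching.xor_const (hρ : IsSwitching G m ρ) (c : Bool) :
    IsSwitching G m fun v => (ρ v ^^ c) := fun e he => by
  rw [← hρ e he]
  cases c <;> simp

lemma IsSwitching.congr (hρ : IsSwitching G m ρ) (h : ∀ v ∈ G.verts, ρ v = ρ' v) :
    IsSwitching G m ρ' := fun e he => by
  rw [← h _ (G.fst_mem e he), ← h _ (G.snd_mem e he)]
  exact hρ e he

lemma IsSwitching.xor_eq_of_connected (hρ : IsSwitching G m ρ) (hρ' : IsSwitching G m ρ')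
    (hG : Connected G) {u v : α} (hu : u ∈ G.verts) (hv : v ∈ G.verts) :
    (ρ v ^^ ρ' v) = (ρ u ^^ ρ' u) := by
  obtain ⟨L, hL⟩ := hG u hu v hv
  have h := (hρ.walkGain_r hL).symm.trans (hρ'.walkGain_r hL)
  revert h
  cases ρ u <;> cases ρ v <;> cases ρ' u <;> cases ρ' v <;> decide

lemma IsSwitching.of_union [DecidableEq β] {A B U : Multigraph α β} (hA : IsSwitching A m ρ)
    (hB : IsSwitching B m ρ) (hAU : IsSubgraph A U) (hBU : IsSubgraph B U)
    (hU : U.edges ⊆ A.edges ∪ B.edges) : IsSwitching U m ρ := fun e he => by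
  rcases Finset.mem_union.1 (hU he) with heA | heB
  · rw [← (hAU.2.2 e heA).1, ← (hAU.2.2 e heA).2]
    exact hA e heA
  · rw [← (hBU.2.2 e heB).1, ← (hBU.2.2 e heB).2]
    exact hB e heB

end Switching

lemma IsSwitching.exists_of_union [DecidableEq α] [DecidableEq β] {m : β → PM}
    {A B U : Multigraph α β} {ρA ρB : α → Bool} (hρA : IsSwitching A m ρA)
    (hρB : IsSwitching B m ρB) (hAU : IsSubgraph A U) (hBU : IsSubgraph B U)
    (hU : U.edges ⊆ A.edges ∪ B.edges) (c : Bool)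
    (hc : ∀ v ∈ A.verts ∩ B.verts, ρA v = (ρB v ^^ c)) :
    ∃ ρ, IsSwitching U m ρ := by
  refine ⟨fun v => if v ∈ A.verts then ρA v else (ρB v ^^ c), .of_union
    (hρA.congr fun v hv => by simp [hv]) ((hρB.xor_const c).congr fun v hv => ?_) hAU hBU hU⟩
  by_cases hvA : v ∈ A.verts
  · simp [hvA, hc v (Finset.mem_inter.2 ⟨hvA, hv⟩)]
  · simp [hvA]

theorem purelyPeriodic_union_general {α β : Type} [DecidableEq α] [DecidableEq β]
    (G : Multigraph α β) (m : β → PM)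
    (A B : Multigraph α β) (hA : IsSubgraph A G) (hB : IsSubgraph B G)
    (hppA : PurelyPeriodic A m) (hppB : PurelyPeriodic B m)
    (hinter : ∃ C : Multigraph α β, IsSubgraph C G ∧
      C.verts = A.verts ∩ B.verts ∧ C.edges = A.edges ∩ B.edges ∧
      C.verts.Nonempty ∧ Connected C) :
    ∀ U : Multigraph α β, IsSubgraph U G →
      U.verts = A.verts ∪ B.verts → U.edges = A.edges ∪ B.edges →
      PurelyPeriodic U m := by
  intro U hU hUV hUE
  obtain ⟨C, hC, hCV, hCE, ⟨u₀, hu₀⟩, hconn⟩ := hinter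
  obtain ⟨ρA, hρA⟩ := hppA.exists_isSwitching
  obtain ⟨ρB, hρB⟩ := hppB.exists_isSwitching
  have hCA : IsSubgraph C A := hC.of_subset hA
    (hCV ▸ Finset.inter_subset_left) (hCE ▸ Finset.inter_subset_left)
  have hCB : IsSubgraph C B := hC.of_subset hB
    (hCV ▸ Finset.inter_subset_right) (hCE ▸ Finset.inter_subset_right)
  have hAU : IsSubgraph A U := hA.of_subset hU
    (hUV ▸ Finset.subset_union_left) (hUE ▸ Finset.subset_union_left)
  have hBU : IsSubgraph B U := hB.of_subset hU
    (hUV ▸ Finset.subset_union_right) (hUE ▸ Finset.subset_union_right)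
  have hshift : ∀ v ∈ A.verts ∩ B.verts, ρA v = (ρB v ^^ (ρA u₀ ^^ ρB u₀)) := by
    intro v hv
    rw [← (hρA.mono hCA).xor_eq_of_connected (hρB.mono hCB) hconn hu₀ (hCV ▸ hv),
      Bool.xor_left_comm, Bool.xor_self, Bool.xor_false]
  obtain ⟨ρ, hρ⟩ := hρA.exists_of_union hρB hAU hBU hUE.le _ hshift
  exact hρ.purelyPeriodic

/-- If two purely periodic subgraphs of a `ℤ²⋊𝒞ₛ`-gain graph have
connected (nonempty) intersection, then their union is purely periodic. -/
theorem purelyPeriodic_union {α β : Type} [DecidableEq α] [DecidableEq β]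
    (G : Multigraph α β) (m : β → PM) (hGm : IsGainGraph G m)
    (A B : Multigraph α β) (hA : IsSubgraph A G) (hB : IsSubgraph B G)
    (hppA : PurelyPeriodic A m) (hppB : PurelyPeriodic B m)
    (hinter : ∃ C : Multigraph α β, IsSubgraph C G ∧
      C.verts = A.verts ∩ B.verts ∧ C.edges = A.edges ∩ B.edges ∧
      C.verts.Nonempty ∧ Connected C) :
    ∀ U : Multigraph α β, IsSubgraph U G →
      U.verts = A.verts ∪ B.verts → U.edges = A.edges ∪ B.edges →
      PurelyPeriodic U m :=
  purelyPeriodic_union_general G m A B hA hB hppA hppB hinter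

end Crystal
end
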